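/- arXiv:2407.03837 — 5 statements merged into one kernel-verified Lean document; each statement's English description precedes it below -/
import Mathlib

section
/- Let a group G act on a set X, let μ be a G-invariant measure on X, and let C ⊆ X be measurable with X = G·C and μ(G_C · C) < ∞ (where G_C·C is measurable). Then sup over x ∈ X of μ((E_{G,C})_x) ≤ μ(G_C · C) < ∞, i.e., every section of E_{G,C} has measure bounded by μ(G_C·C). -/
open scoped Pointwise
open MeasureTheory

/-- `E_{G,C} = ⋃_{g ∈ G} (g•C × g•C)`. -/
def EGC (G : Type*) {X : Type*} [Group G] [MulAction G X] (C : Set X) : Set (X × X) :=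
  ⋃ g : G, (g • C) ×ˢ (g • C)

/-- `G_C = {g : g•C ∩ C ≠ ∅}`. -/
def stabSet (G : Type*) {X : Type*} [Group G] [MulAction G X] (C : Set X) : Set G :=
  {g : G | (g • C ∩ C).Nonempty}

theorem uniform_bound_EGC {G X : Type*} [Group G] [MeasurableSpace X] [MulAction G X]
    (μ : Measure X) (hinv : ∀ (g : G) (A : Set X), μ (g • A) = μ A)
    (C : Set X) (hCmeas : MeasurableSet C)
    (hcov : ∀ x : X, ∃ g : G, x ∈ g • C)
    (hGCCmeas : MeasurableSet (⋃ g ∈ stabSet G C, g • C))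
    (hGCCfin : μ (⋃ g ∈ stabSet G C, g • C) < ⊤) :
    ⨆ x : X, μ {y : X | (x, y) ∈ EGC G C} ≤ μ (⋃ g ∈ stabSet G C, g • C) := by
  apply iSup_le
  intro x
  obtain ⟨γ, hγ⟩ := hcov x
  have hsub : {y : X | (x, y) ∈ EGC G C} ⊆ γ • ⋃ g ∈ stabSet G C, g • C := by
    intro y hy
    simp only [EGC, Set.mem_setOf_eq, Set.mem_iUnion, Set.mem_prod] at hy
    obtain ⟨g, hxg, hyg⟩ := hy
    obtain ⟨c, hc, hcy⟩ := hyg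
    have hcy' : g • c = y := hcy
    have hstab : γ⁻¹ * g ∈ stabSet G C := by
      obtain ⟨c', hc', hcx⟩ := hxg
      obtain ⟨c'', hc'', hcx'⟩ := hγ
      have hcx2 : g • c' = x := hcx
      have hcx2' : γ • c'' = x := hcx'
      refine ⟨γ⁻¹ • x, ⟨c', hc', ?_⟩, ?_⟩
      · show (γ⁻¹ * g) • c' = γ⁻¹ • x
        rw [mul_smul, hcx2]
      · show γ⁻¹ • x ∈ C
        rw [← hcx2', inv_smul_smul]; exact hc''
    refine ⟨(γ⁻¹ * g) • c, ?_, ?_⟩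
    · exact Set.mem_biUnion hstab ⟨c, hc, rfl⟩
    · show γ • (γ⁻¹ * g) • c = y
      rw [smul_smul, mul_inv_cancel_left, hcy']
  calc μ {y : X | (x, y) ∈ EGC G C} ≤ μ (γ • ⋃ g ∈ stabSet G C, g • C) := measure_mono hsub
    _ = μ (⋃ g ∈ stabSet G C, g • C) := hinv γ _
end

section
/- Let a group Γ act properly on a topological space X with X = Γ·C₁ for a compact C₁, fix x₁ ∈ C₁ and let Λ := Γ·x₁ = {γ·x₁ : γ ∈ Γ}. Then for every compact C ⊆ X with X = Γ·C and every x ∈ X with x ∈ γ_x·C, one has #((E_{Γ,C})_x ∩ Λ) ≤ #{γ ∈ Γ : γ·x₁ ∈ Γ_C·C}, and the right-hand side is finite and independent of x. Consequently Λ is uniform locally finite in the coarse space (X, 𝓔^X_Γ), and moreover E_{Γ,C₁}[Λ] = X, so Λ is a quasi lattice. -/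
open scoped Pointwise

/-- The section `E_x = {y : (x,y) ∈ E}`. -/
def relSec {X : Type*} (E : Set (X × X)) (x : X) : Set X := {y | (x, y) ∈ E}

/-- `E[Λ] = ⋃_{λ ∈ Λ} E_λ`. -/
def relImage {X : Type*} (E : Set (X × X)) (K : Set X) : Set X :=
  {y | ∃ x ∈ K, (x, y) ∈ E}

/-- Finiteness of the set of `γ` with `γ • x₁ ∈ C`, for compact `C`. -/
lemma finite_hit {Γ X : Type*} [Group Γ] [TopologicalSpace X] [MulAction Γ X]
    (hproper : ∀ S : Set X, IsCompact S → {γ : Γ | (γ • S ∩ S).Nonempty}.Finite)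
    {C₁ : Set X} (hC₁ : IsCompact C₁) {x₁ : X} (hx₁ : x₁ ∈ C₁)
    {C : Set X} (hC : IsCompact C) : {γ : Γ | γ • x₁ ∈ C}.Finite := by
  refine (hproper (C ∪ C₁) (hC.union hC₁)).subset ?_
  intro γ hγ
  exact ⟨γ • x₁, ⟨x₁, Or.inr hx₁, rfl⟩, Or.inl hγ⟩

lemma finite_F {Γ X : Type*} [Group Γ] [TopologicalSpace X] [MulAction Γ X]
    (hproper : ∀ S : Set X, IsCompact S → {γ : Γ | (γ • S ∩ S).Nonempty}.Finite)
    {C₁ : Set X} (hC₁ : IsCompact C₁) {x₁ : X} (hx₁ : x₁ ∈ C₁)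
    {C : Set X} (hC : IsCompact C) :
    {γ : Γ | γ • x₁ ∈ ⋃ g ∈ stabSet Γ C, g • C}.Finite := by
  have hstab : (stabSet Γ C).Finite := hproper C hC
  have hhit := finite_hit hproper hC₁ hx₁ hC
  have : {γ : Γ | γ • x₁ ∈ ⋃ g ∈ stabSet Γ C, g • C} ⊆
      ⋃ g ∈ stabSet Γ C, (fun δ : Γ => g * δ) '' {γ : Γ | γ • x₁ ∈ C} := by
    intro γ hγ
    simp only [Set.mem_setOf_eq, Set.mem_iUnion] at hγ ⊢
    obtain ⟨g, hg, hmem⟩ := hγ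
    refine ⟨g, hg, g⁻¹ * γ, ?_, by group⟩
    have : g⁻¹ • γ • x₁ ∈ C := by
      rwa [← Set.mem_smul_set_iff_inv_smul_mem]
    simpa [mul_smul] using this
  exact (hstab.biUnion fun g _ => hhit.image _).subset this

lemma sec_subset {Γ X : Type*} [Group Γ] [MulAction Γ X]
    (C : Set X) (x₁ : X) (x : X) (γx : Γ) (hx : x ∈ γx • C) :
    relSec (EGC Γ C) x ∩ {y : X | ∃ γ : Γ, y = γ • x₁} ⊆
      (fun γ : Γ => γx • γ • x₁) '' {γ : Γ | γ • x₁ ∈ ⋃ g ∈ stabSet Γ C, g • C} := by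
  rintro y ⟨hy, γ, rfl⟩
  simp only [relSec, EGC, Set.mem_setOf_eq, Set.mem_iUnion, Set.mem_prod] at hy
  obtain ⟨g, hxg, hyg⟩ := hy
  refine ⟨γx⁻¹ * γ, ?_, by simp [mul_smul]⟩
  simp only [Set.mem_setOf_eq, Set.mem_iUnion]
  refine ⟨γx⁻¹ * g, ⟨γx⁻¹ • x, ?_, ?_⟩, ?_⟩
  · rw [mul_smul]
    exact Set.smul_mem_smul_set_iff.mpr hxg
  · exact Set.mem_smul_set_iff_inv_smul_mem.mp hx
  · rw [mul_smul, mul_smul]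
    exact Set.smul_mem_smul_set_iff.mpr hyg

theorem orbit_is_quasi_lattice {Γ X : Type*} [Group Γ] [TopologicalSpace X] [MulAction Γ X]
    (hproper : ∀ S : Set X, IsCompact S → {γ : Γ | (γ • S ∩ S).Nonempty}.Finite)
    (C₁ : Set X) (hC₁ : IsCompact C₁) (hcov₁ : ∀ x : X, ∃ γ : Γ, x ∈ γ • C₁)
    (x₁ : X) (hx₁ : x₁ ∈ C₁) :
    let Λ : Set X := {y : X | ∃ γ : Γ, y = γ • x₁}
    let 𝓔 : Set (Set (X × X)) := {E | ∃ C : Set X, IsCompact C ∧ E ⊆ EGC Γ C}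
    -- the counting bound, uniform in x
    (∀ C : Set X, IsCompact C → (∀ x : X, ∃ γ : Γ, x ∈ γ • C) →
      {γ : Γ | γ • x₁ ∈ ⋃ g ∈ stabSet Γ C, g • C}.Finite ∧
      ∀ (x : X) (γx : Γ), x ∈ γx • C →
        (relSec (EGC Γ C) x ∩ Λ).ncard ≤
          {γ : Γ | γ • x₁ ∈ ⋃ g ∈ stabSet Γ C, g • C}.ncard) ∧
    -- Λ is uniformly locally finite
    (∀ E ∈ 𝓔, ∃ N : ℕ, ∀ x : X, (relSec E x ∩ Λ).Finite ∧ (relSec E x ∩ Λ).ncard ≤ N) ∧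
    -- Λ is coarsely dense: E_{Γ,C₁}[Λ] = X, so Λ is a quasi lattice
    relImage (EGC Γ C₁) Λ = Set.univ := by
  intro Λ 𝓔
  refine ⟨?_, ?_, ?_⟩
  · intro C hC _
    have hF := finite_F hproper hC₁ hx₁ hC (x₁ := x₁)
    refine ⟨hF, fun x γx hx => ?_⟩
    calc (relSec (EGC Γ C) x ∩ Λ).ncard
        ≤ ((fun γ : Γ => γx • γ • x₁) ''
            {γ : Γ | γ • x₁ ∈ ⋃ g ∈ stabSet Γ C, g • C}).ncard :=
          Set.ncard_le_ncard (sec_subset C x₁ x γx hx) (hF.image _)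
      _ ≤ _ := Set.ncard_image_le hF
  · rintro E ⟨C, hC, hEC⟩
    set C' := C ∪ C₁ with hC'
    have hC'c : IsCompact C' := hC.union hC₁
    have hF := finite_F hproper hC₁ hx₁ hC'c (x₁ := x₁)
    refine ⟨{γ : Γ | γ • x₁ ∈ ⋃ g ∈ stabSet Γ C', g • C'}.ncard, fun x => ?_⟩
    obtain ⟨γx, hγx⟩ := hcov₁ x
    have hxC' : x ∈ γx • C' := Set.smul_set_mono Set.subset_union_right hγx
    have hsub : relSec E x ∩ Λ ⊆
        (fun γ : Γ => γx • γ • x₁) '' {γ : Γ | γ • x₁ ∈ ⋃ g ∈ stabSet Γ C', g • C'} := by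
      refine subset_trans ?_ (sec_subset C' x₁ x γx hxC')
      refine Set.inter_subset_inter_left _ ?_
      intro y hy
      have : (x, y) ∈ EGC Γ C := hEC hy
      simp only [relSec, EGC, Set.mem_setOf_eq, Set.mem_iUnion, Set.mem_prod] at this ⊢
      obtain ⟨g, h1, h2⟩ := this
      exact ⟨g, Set.smul_set_mono Set.subset_union_left h1,
        Set.smul_set_mono Set.subset_union_left h2⟩
    refine ⟨(hF.image _).subset hsub, ?_⟩
    exact le_trans (Set.ncard_le_ncard hsub (hF.image _)) (Set.ncard_image_le hF)
  · ext y
    simp only [Set.mem_univ, iff_true, relImage, Set.mem_setOf_eq]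
    obtain ⟨γ, hγ⟩ := hcov₁ y
    refine ⟨γ • x₁, ⟨γ, rfl⟩, ?_⟩
    simp only [EGC, Set.mem_iUnion, Set.mem_prod]
    exact ⟨γ, Set.smul_mem_smul_set hx₁, hγ⟩
end

section
/- Let (X, 𝓑, μ) be a σ-finite measure space with a coarse structure 𝓔, S ⊆ X uniform locally finite, E ∈ 𝓔 ∩ (𝓑×𝓑) measurable with μ(E_s) = C > 0 for all s ∈ S, and θ : X×X → ℝ a bounded function supported in S × S with boundary ∂_S θ(s) := Σ_{s'}θ(s',s) − Σ_{s'}θ(s,s'). Define c(x,y) := Σ_{(s₁,s₂)∈S×S} θ(s₁,s₂)·χ_{E_{s₁}×E_{s₂}}(x,y). Then for all x ∈ X, ∂_X c(x) := ∫ c(y,x)dμ(y) − ∫ c(x,y)dμ(y) = C · Σ_{s∈S} (∂_S θ)(s) · χ_{E_s}(x). -/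
open MeasureTheory

/-- A coarse structure on `X` (Roe). -/
structure CoarseStructure (X : Type*) where
  sets : Set (Set (X × X))
  diag_mem : {p : X × X | p.1 = p.2} ∈ sets
  subset_mem : ∀ E E' : Set (X × X), E' ∈ sets → E ⊆ E' → E ∈ sets
  union_mem : ∀ E₁ E₂ : Set (X × X), E₁ ∈ sets → E₂ ∈ sets → E₁ ∪ E₂ ∈ sets
  comp_mem : ∀ E₁ E₂ : Set (X × X), E₁ ∈ sets → E₂ ∈ sets →
    {p : X × X | ∃ y, (p.1, y) ∈ E₁ ∧ (y, p.2) ∈ E₂} ∈ sets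
  transpose_mem : ∀ E : Set (X × X), E ∈ sets → {p : X × X | (p.2, p.1) ∈ E} ∈ sets

/-- `S` is uniformly locally finite. -/
def UniformLocallyFinite {X : Type*} (𝓔 : CoarseStructure X) (S : Set X) : Prop :=
  ∀ E ∈ 𝓔.sets, ∃ N : ℕ, ∀ x : X, (relSec E x ∩ S).Finite ∧ (relSec E x ∩ S).ncard ≤ N

/-- The combinatorial boundary of a 1-chain over `S`. -/
noncomputable def boundaryS {X : Type*} (S : Set X) (θ : X × X → ℝ) (s : X) : ℝ :=
  (∑ᶠ s' ∈ S, θ (s', s)) - ∑ᶠ s' ∈ S, θ (s, s')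

/-- The smeared 1-chain `c(x,y) = Σ_{(s₁,s₂) ∈ S×S} θ(s₁,s₂)·χ_{E_{s₁}×E_{s₂}}(x,y)`. -/
noncomputable def smeared {X : Type*} (S : Set X) (E : Set (X × X)) (θ : X × X → ℝ)
    (p : X × X) : ℝ :=
  ∑ᶠ s₁ ∈ S, ∑ᶠ s₂ ∈ S,
    θ (s₁, s₂) * Set.indicator ((relSec E s₁) ×ˢ (relSec E s₂)) (fun _ => (1 : ℝ)) p

/-!
For fixed `x`, only the finitely many `s ∈ S` with `x ∈ E_s` contribute, so `y ↦ c(y, x)` and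
`y ↦ c(x, y)` are finitely supported combinations `∑ₛ aₛ χ_{E_s}` whose coefficients are the
flow of `θ` into, resp. out of, this finite set of sites. Since every `E_s` has measure `C`,
each integral is `C ∑ₛ aₛ`, and exchanging the finite sums turns inflow minus outflow into
`∑_{x ∈ E_s} ∂_S θ(s)`.
-/

open Function

theorem finsum_mem_sum_comm {α β : Type*} {S : Set α} (s : Finset β) (f : α → β → ℝ)
    (hf : ∀ b ∈ s, (S ∩ support (f · b)).Finite) :
    ∑ᶠ a ∈ S, ∑ b ∈ s, f a b = ∑ b ∈ s, ∑ᶠ a ∈ S, f a b := by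
  simp only [finsum_mem_def]
  rw [← finsum_sum_comm]
  · exact finsum_congr fun a => by by_cases ha : a ∈ S <;> simp [ha]
  · intro b hb
    rw [HasFiniteSupport, Set.support_indicator]
    exact hf b hb

theorem finite_inter_support_finset_sum {α β : Type*} {S : Set α} (s : Finset β) (f : α → β → ℝ)
    (hf : ∀ b ∈ s, (S ∩ support (f · b)).Finite) :
    (S ∩ support fun a => ∑ b ∈ s, f a b).Finite := by
  refine (s.finite_toSet.biUnion hf).subset ?_
  rintro a ⟨haS, ha⟩
  obtain ⟨b, hb, hab⟩ := Finset.exists_ne_zero_of_sum_ne_zero ha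
  exact Set.mem_biUnion hb ⟨haS, hab⟩

theorem integral_finsum_mem_mul_indicator {X ι : Type*} [MeasurableSpace X] {μ : Measure X}
    {S : Set ι} {a : ι → ℝ} {B : ι → Set X} {c : ℝ}
    (ha : (S ∩ support a).Finite) (hB : ∀ i ∈ S, MeasurableSet (B i)) (hc : 0 ≤ c)
    (hμB : ∀ i ∈ S, μ (B i) = ENNReal.ofReal c) :
    ∫ y, ∑ᶠ i ∈ S, a i * (B i).indicator (fun _ => (1 : ℝ)) y ∂μ = c * ∑ᶠ i ∈ S, a i := by
  have htS : ↑ha.toFinset ⊆ S := fun i hi => (ha.mem_toFinset.1 hi).1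
  have hsum : ∀ y, ∑ᶠ i ∈ S, a i * (B i).indicator (fun _ => (1 : ℝ)) y =
      ∑ i ∈ ha.toFinset, (B i).indicator (fun _ => a i) y := fun y => by
    rw [finsum_mem_eq_sum_of_subset _ ?_ htS]
    · exact Finset.sum_congr rfl fun i _ => by by_cases hy : y ∈ B i <;> simp [hy]
    · exact fun i hi => ha.mem_toFinset.2 ⟨hi.1, support_mul_subset_left _ _ hi.2⟩
  have hμc : ∀ i ∈ S, μ.real (B i) = c := fun i hi => by
    rw [measureReal_def, hμB i hi, ENNReal.toReal_ofReal hc]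
  simp_rw [hsum]
  rw [integral_finsetSum, finsum_mem_eq_sum_of_subset _ ha.coe_toFinset.superset htS,
    Finset.mul_sum]
  · refine Finset.sum_congr rfl fun i hi => ?_
    rw [integral_indicator_const _ (hB i (htS hi)), hμc i (htS hi), smul_eq_mul, mul_comm]
  · intro i hi
    refine (integrable_indicator_iff (hB i (htS hi))).2 (integrableOn_const ?_)
    rw [hμB i (htS hi)]
    exact ENNReal.ofReal_ne_top

theorem UniformLocallyFinite.finite_inter {X : Type*} {𝓔 : CoarseStructure X} {S : Set X}
    (hS : UniformLocallyFinite 𝓔 S) {F : Set (X × X)} (hF : F ∈ 𝓔.sets) (x : X) :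
    (relSec F x ∩ S).Finite :=
  let ⟨_, hN⟩ := hS F hF
  (hN x).1

section smeared

variable {X : Type*} {S : Set X} {E : Set (X × X)} {θ : X × X → ℝ} {x : X} {A : Finset X}

theorem finsum_mem_mul_indicator_relSec (hA : (A : Set X) = {s ∈ S | x ∈ relSec E s})
    (f : X → ℝ) :
    ∑ᶠ s ∈ S, f s * (relSec E s).indicator (fun _ => (1 : ℝ)) x = ∑ s ∈ A, f s := by
  have hmem : ∀ s, s ∈ A ↔ s ∈ S ∧ x ∈ relSec E s := fun s => by
    rw [← Finset.mem_coe, hA]; rfl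
  rw [finsum_mem_eq_sum_of_subset _ ?_ fun s hs => ((hmem s).1 hs).1]
  · exact Finset.sum_congr rfl fun s hs => by simp [((hmem s).1 hs).2]
  · rintro s ⟨hsS, hs⟩
    refine (hmem s).2 ⟨hsS, ?_⟩
    by_contra hx
    simp [hx] at hs

theorem smeared_apply (y z : X) :
    smeared S E θ (y, z) = ∑ᶠ s₁ ∈ S, ∑ᶠ s₂ ∈ S, θ (s₁, s₂) *
      ((relSec E s₁).indicator (fun _ => (1 : ℝ)) y *
        (relSec E s₂).indicator (fun _ => (1 : ℝ)) z) :=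
  finsum_mem_congr rfl fun _ _ => finsum_mem_congr rfl fun _ _ =>
    congrArg _ Set.indicator_prod_one

theorem smeared_apply_left (hA : (A : Set X) = {s ∈ S | x ∈ relSec E s})
    (hrow : ∀ s, (S ∩ support fun s' => θ (s, s')).Finite) (y : X) :
    smeared S E θ (x, y) =
      ∑ᶠ s ∈ S, (∑ s' ∈ A, θ (s', s)) * (relSec E s).indicator (fun _ => (1 : ℝ)) y :=
  calc smeared S E θ (x, y)
      = ∑ᶠ s' ∈ S, (∑ᶠ s ∈ S, θ (s', s) * (relSec E s).indicator (fun _ => (1 : ℝ)) y) *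
          (relSec E s').indicator (fun _ => (1 : ℝ)) x := by
        rw [smeared_apply]
        refine finsum_mem_congr rfl fun s' _ => ?_
        rw [finsum_mem_mul]
        exact finsum_mem_congr rfl fun s _ => by ring
    _ = ∑ s' ∈ A, ∑ᶠ s ∈ S, θ (s', s) * (relSec E s).indicator (fun _ => (1 : ℝ)) y :=
        finsum_mem_mul_indicator_relSec hA _
    _ = ∑ᶠ s ∈ S, ∑ s' ∈ A, θ (s', s) * (relSec E s).indicator (fun _ => (1 : ℝ)) y :=
        (finsum_mem_sum_comm _ _ fun s' _ =>
          (hrow s').subset <| Set.inter_subset_inter_right _ <| support_mul_subset_left _ _).symm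
    _ = _ := finsum_mem_congr rfl fun _ _ => (Finset.sum_mul ..).symm

theorem smeared_apply_right (hA : (A : Set X) = {s ∈ S | x ∈ relSec E s}) (y : X) :
    smeared S E θ (y, x) =
      ∑ᶠ s ∈ S, (∑ s' ∈ A, θ (s, s')) * (relSec E s).indicator (fun _ => (1 : ℝ)) y := by
  rw [smeared_apply]
  refine finsum_mem_congr rfl fun s _ => ?_
  rw [Finset.sum_mul, ← finsum_mem_mul_indicator_relSec hA]
  exact finsum_mem_congr rfl fun s' _ => by ring

variable [MeasurableSpace X] {μ : Measure X} {C : ℝ}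

theorem integral_smeared_apply_left (hA : (A : Set X) = {s ∈ S | x ∈ relSec E s})
    (hE : MeasurableSet E) (hC : 0 ≤ C) (hconst : ∀ s ∈ S, μ (relSec E s) = ENNReal.ofReal C)
    (hrow : ∀ s, (S ∩ support fun s' => θ (s, s')).Finite) :
    ∫ y, smeared S E θ (x, y) ∂μ = C * ∑ s ∈ A, ∑ᶠ s' ∈ S, θ (s, s') := by
  simp_rw [smeared_apply_left hA hrow]
  rw [integral_finsum_mem_mul_indicator (B := relSec E)
      (finite_inter_support_finset_sum _ _ fun s _ => hrow s)
      (fun s _ => measurable_prodMk_left hE) hC hconst,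
    finsum_mem_sum_comm _ _ fun s _ => hrow s]

theorem integral_smeared_apply_right (hA : (A : Set X) = {s ∈ S | x ∈ relSec E s})
    (hE : MeasurableSet E) (hC : 0 ≤ C) (hconst : ∀ s ∈ S, μ (relSec E s) = ENNReal.ofReal C)
    (hcol : ∀ s, (S ∩ support fun s' => θ (s', s)).Finite) :
    ∫ y, smeared S E θ (y, x) ∂μ = C * ∑ s ∈ A, ∑ᶠ s' ∈ S, θ (s', s) := by
  simp_rw [smeared_apply_right hA]
  rw [integral_finsum_mem_mul_indicator (B := relSec E)
      (finite_inter_support_finset_sum _ _ fun s _ => hcol s)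
      (fun s _ => measurable_prodMk_left hE) hC hconst,
    finsum_mem_sum_comm _ _ fun s _ => hcol s]

end smeared

theorem boundary_of_smeared_chain_general {X : Type*} [MeasurableSpace X]
    (μ : Measure X) (𝓔 : CoarseStructure X)
    (S : Set X) (hS : UniformLocallyFinite 𝓔 S)
    (E : Set (X × X)) (hE : E ∈ 𝓔.sets) (hEmeas : MeasurableSet E)
    (C : ℝ) (hC : 0 < C) (hconst : ∀ s ∈ S, μ (relSec E s) = ENNReal.ofReal C)
    (θ : X × X → ℝ)
    (Eθ : Set (X × X)) (hEθ : Eθ ∈ 𝓔.sets)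
    (hsupp : ∀ p : X × X, θ p ≠ 0 → p.1 ∈ S ∧ p.2 ∈ S ∧ p ∈ Eθ) :
    ∀ x : X,
      (∫ y, smeared S E θ (y, x) ∂μ) - ∫ y, smeared S E θ (x, y) ∂μ =
        C * ∑ᶠ s ∈ S, boundaryS S θ s * Set.indicator (relSec E s) (fun _ => (1 : ℝ)) x := by
  intro x
  have hrow (s : X) : (S ∩ support fun s' => θ (s, s')).Finite :=
    (hS.finite_inter hEθ s).subset fun s' hs' => ⟨(hsupp _ hs'.2).2.2, hs'.1⟩
  have hcol (s : X) : (S ∩ support fun s' => θ (s', s)).Finite :=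
    (hS.finite_inter (𝓔.transpose_mem Eθ hEθ) s).subset fun s' hs' =>
      ⟨(hsupp _ hs'.2).2.2, hs'.1⟩
  obtain ⟨A, hA⟩ : ∃ A : Finset X, (A : Set X) = {s ∈ S | x ∈ relSec E s} :=
    ((hS.finite_inter (𝓔.transpose_mem E hE) x).subset fun s hs => ⟨hs.2, hs.1⟩).exists_finset_coe
  rw [integral_smeared_apply_right hA hEmeas hC.le hconst hcol,
    integral_smeared_apply_left hA hEmeas hC.le hconst hrow, ← mul_sub, ← Finset.sum_sub_distrib,
    finsum_mem_mul_indicator_relSec hA]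
  simp only [boundaryS]

theorem boundary_of_smeared_chain {X : Type*} [MeasurableSpace X]
    (μ : Measure X) [SigmaFinite μ] (𝓔 : CoarseStructure X)
    (S : Set X) (hS : UniformLocallyFinite 𝓔 S)
    (E : Set (X × X)) (hE : E ∈ 𝓔.sets) (hEmeas : MeasurableSet E)
    (C : ℝ) (hC : 0 < C) (hconst : ∀ s ∈ S, μ (relSec E s) = ENNReal.ofReal C)
    (θ : X × X → ℝ) (M : ℝ) (hθbd : ∀ p : X × X, |θ p| ≤ M)
    (Eθ : Set (X × X)) (hEθ : Eθ ∈ 𝓔.sets)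
    (hsupp : ∀ p : X × X, θ p ≠ 0 → p.1 ∈ S ∧ p.2 ∈ S ∧ p ∈ Eθ) :
    ∀ x : X,
      (∫ y, smeared S E θ (y, x) ∂μ) - ∫ y, smeared S E θ (x, y) ∂μ =
        C * ∑ᶠ s ∈ S, boundaryS S θ s * Set.indicator (relSec E s) (fun _ => (1 : ℝ)) x :=
  boundary_of_smeared_chain_general μ 𝓔 S hS E hE hEmeas C hC hconst θ Eθ hEθ hsupp
end

section
/- Let (X, 𝓔) be a coarse space, S ⊆ X, and θ a Ponzi scheme supported in S×S, i.e., ∂_S θ ≥ 0 and there is E' ∈ 𝓔 with Σ_{s ∈ E'_{x₀} ∩ S} ∂_S θ(s) ≥ 1 for all x₀ ∈ X. Suppose E is a measurable controlled set with μ(E_s) = C > 0 for all s ∈ S, and let c be as above with ∂_X c = C·Σ_{s∈S}(∂_S θ)(s)·χ_{E_s}. Then ∂_X c ≥ 0, and for any measurable controlled set Ẽ' ⊇ E' ∘ E one has ∫_{(Ẽ')_{x₀}} ∂_X c dμ ≥ C² for every x₀ ∈ X; hence c/C² is a μ-Ponzi scheme. -/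
open MeasureTheory

/-- Composition of entourages. -/
def relComp {X : Type*} (E1 E2 : Set (X × X)) : Set (X × X) :=
  {p | ∃ y, (p.1, y) ∈ E1 ∧ (y, p.2) ∈ E2}

/-- The integral boundary against `μ`. -/
noncomputable def boundaryX {X : Type*} [MeasurableSpace X] (μ : Measure X)
    (c : X × X → ℝ) (x : X) : ℝ :=
  (∫ y, c (y, x) ∂μ) - ∫ y, c (x, y) ∂μ

/-!
The boundary of the smeared chain is `C` times the function `x ↦ ∑_{s ∈ S, x ∈ E_s} ∂_S θ(s)`,
which is nonnegative because `∂_S θ` is. On `A = Ẽ'_{x₀}` only the finitely many `s ∈ S` with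
`E_s ∩ A ≠ ∅` contribute (they lie in `(Ẽ' ∘ Eᵀ)_{x₀} ∩ S`), so the integral over `A` is the finite
sum `C ∑_s ∂_S θ(s) μ(E_s ∩ A)`. Dropping all `s` except those in `E'_{x₀} ∩ S`, whose sections
`E_s` lie entirely in `A` and have measure `C`, bounds it below by `C² ∑_{s ∈ E'_{x₀} ∩ S} ∂_S θ(s)`.
-/

section Relations

variable {X : Type*}

theorem relSec_mono {E F : Set (X × X)} (h : E ⊆ F) (x : X) : relSec E x ⊆ relSec F x :=
  fun _ hy => h hy

theorem relSec_subset_relSec_relComp {E' E : Set (X × X)} {x s : X} (hs : s ∈ relSec E' x) :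
    relSec E s ⊆ relSec (relComp E' E) x :=
  fun _ hy => ⟨s, hs, hy⟩

theorem mem_relSec_relComp_transpose {F E : Set (X × X)} {x s y : X} (hyF : y ∈ relSec F x)
    (hyE : y ∈ relSec E s) : s ∈ relSec (relComp F {p : X × X | (p.2, p.1) ∈ E}) x :=
  ⟨y, hyF, hyE⟩

theorem UniformLocallyFinite.finite_relSec_inter {𝓔 : CoarseStructure X} {S : Set X}
    (hS : UniformLocallyFinite 𝓔 S) {E : Set (X × X)} (hE : E ∈ 𝓔.sets) (x : X) :
    (relSec E x ∩ S).Finite :=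
  ((hS E hE).choose_spec x).1

end Relations

section Smearing

variable {ι X : Type*} {S : Set ι} {F : ι → Set X} {b : ι → ℝ}

theorem finsum_mem_mul_indicator_nonneg (hb : ∀ i ∈ S, 0 ≤ b i) (x : X) :
    0 ≤ ∑ᶠ i ∈ S, b i * (F i).indicator (fun _ => (1 : ℝ)) x :=
  finsum_mem_induction (0 ≤ ·) le_rfl (fun _ _ => add_nonneg)
    fun i hi => mul_nonneg (hb i hi) (Set.indicator_nonneg (fun _ _ => zero_le_one) x)

theorem finsum_mem_mul_indicator_eq_sum {T : Finset ι} (hTS : (T : Set ι) ⊆ S) {x : X}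
    (hT : ∀ i ∈ S, x ∈ F i → i ∈ T) :
    ∑ᶠ i ∈ S, b i * (F i).indicator (fun _ => (1 : ℝ)) x =
      ∑ i ∈ T, b i * (F i).indicator (fun _ => (1 : ℝ)) x := by
  refine finsum_mem_eq_sum_of_inter_support_eq _ (Set.ext fun i => ⟨?_, ?_⟩)
  · rintro ⟨hiS, hi⟩
    have hxF : x ∈ F i := by
      by_contra hxF
      simp [hxF] at hi
    exact ⟨hT i hiS hxF, hi⟩
  · rintro ⟨hiT, hi⟩
    exact ⟨hTS hiT, hi⟩

variable [MeasurableSpace X] (μ : Measure X)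

theorem setIntegral_finsum_mem_mul_indicator {A : Set X} (hA : MeasurableSet A) {T : Finset ι}
    (hTS : (T : Set ι) ⊆ S) (hT : ∀ i ∈ S, (F i ∩ A).Nonempty → i ∈ T)
    (hF : ∀ i ∈ T, MeasurableSet (F i)) (hFfin : ∀ i ∈ T, μ (F i) ≠ ⊤) :
    ∫ x in A, ∑ᶠ i ∈ S, b i * (F i).indicator (fun _ => (1 : ℝ)) x ∂μ =
      ∑ i ∈ T, b i * μ.real (F i ∩ A) := by
  rw [setIntegral_congr_fun hA fun x hx =>
      finsum_mem_mul_indicator_eq_sum hTS fun i hi hxF => hT i hi ⟨x, hxF, hx⟩,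
    integral_finsetSum]
  · refine Finset.sum_congr rfl fun i hi => ?_
    rw [integral_const_mul, integral_indicator_const _ (hF i hi),
      measureReal_restrict_apply (hF i hi), smul_eq_mul, mul_one]
  · exact fun i hi => ((integrable_indicator_iff (hF i hi)).2
      (integrableOn_const (hFfin i hi))).restrict.const_mul _

theorem sum_mul_measureReal_le_sum_mul_measureReal_inter {A : Set X} {T' T : Finset ι}
    (hT'T : T' ⊆ T) (hb : ∀ i ∈ T, 0 ≤ b i) (hFA : ∀ i ∈ T', F i ⊆ A) :
    ∑ i ∈ T', b i * μ.real (F i) ≤ ∑ i ∈ T, b i * μ.real (F i ∩ A) := by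
  calc ∑ i ∈ T', b i * μ.real (F i) = ∑ i ∈ T', b i * μ.real (F i ∩ A) :=
        Finset.sum_congr rfl fun i hi => by rw [Set.inter_eq_left.2 (hFA i hi)]
    _ ≤ ∑ i ∈ T, b i * μ.real (F i ∩ A) :=
        Finset.sum_le_sum_of_subset_of_nonneg hT'T fun i hi _ =>
          mul_nonneg (hb i hi) measureReal_nonneg

theorem sum_mul_measureReal_le_setIntegral_finsum_mem_mul_indicator {A : Set X}
    (hA : MeasurableSet A) {T' T : Finset ι} (hTS : (T : Set ι) ⊆ S)
    (hT : ∀ i ∈ S, (F i ∩ A).Nonempty → i ∈ T) (hF : ∀ i ∈ T, MeasurableSet (F i))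
    (hFfin : ∀ i ∈ T, μ (F i) ≠ ⊤) (hb : ∀ i ∈ S, 0 ≤ b i) (hT'S : (T' : Set ι) ⊆ S)
    (hFA : ∀ i ∈ T', F i ⊆ A) (hFne : ∀ i ∈ T', (F i).Nonempty) :
    ∑ i ∈ T', b i * μ.real (F i) ≤
      ∫ x in A, ∑ᶠ i ∈ S, b i * (F i).indicator (fun _ => (1 : ℝ)) x ∂μ := by
  rw [setIntegral_finsum_mem_mul_indicator μ hA hTS hT hF hFfin]
  refine sum_mul_measureReal_le_sum_mul_measureReal_inter μ (fun i hi => hT i (hT'S hi) ?_)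
    (fun i hi => hb i (hTS hi)) hFA
  obtain ⟨x, hx⟩ := hFne i hi
  exact ⟨x, hx, hFA i hi hx⟩

end Smearing

theorem smeared_Ponzi_scheme_is_mu_PS_general {X : Type*} [MeasurableSpace X]
    (μ : Measure X) (𝓔 : CoarseStructure X)
    (S : Set X) (hS : UniformLocallyFinite 𝓔 S)
    -- θ is a Ponzi scheme supported in S × S
    (θ : X × X → ℝ)
    (hpos : ∀ s : X, 0 ≤ boundaryS S θ s)
    (E' : Set (X × X)) (hE' : E' ∈ 𝓔.sets)
    (heff : ∀ x₀ : X, 1 ≤ ∑ᶠ s ∈ relSec E' x₀ ∩ S, boundaryS S θ s)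
    -- E is a measurable controlled set constant on S
    (E : Set (X × X)) (hE : E ∈ 𝓔.sets) (hEmeas : MeasurableSet E)
    (C : ℝ) (hC : 0 < C) (hconst : ∀ s ∈ S, μ (relSec E s) = ENNReal.ofReal C)
    -- c is the smeared chain, whose boundary is as computed before
    (c : X × X → ℝ)
    (hboundary : ∀ x : X, boundaryX μ c x =
      C * ∑ᶠ s ∈ S, boundaryS S θ s * Set.indicator (relSec E s) (fun _ => (1 : ℝ)) x) :
    (∀ x : X, 0 ≤ boundaryX μ c x) ∧
    ∀ Etil ∈ 𝓔.sets, MeasurableSet Etil → relComp E' E ⊆ Etil →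
      ∀ x₀ : X, C ^ 2 ≤ ∫ x in relSec Etil x₀, boundaryX μ c x ∂μ := by
  refine ⟨fun x => (hboundary x).symm ▸
    mul_nonneg hC.le (finsum_mem_mul_indicator_nonneg (fun s _ => hpos s) x), ?_⟩
  intro Etil hEtil hEtilmeas hsub x₀
  have hT₀ : (relSec (relComp Etil {p | (p.2, p.1) ∈ E}) x₀ ∩ S).Finite :=
    hS.finite_relSec_inter (𝓔.comp_mem _ _ hEtil (𝓔.transpose_mem E hE)) x₀
  have hT' := hS.finite_relSec_inter hE' x₀
  have hmeasC : ∀ s ∈ S, μ.real (relSec E s) = C := fun s hs => by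
    rw [measureReal_def, hconst s hs, ENNReal.toReal_ofReal hC.le]
  have hcover : ∀ s ∈ S, (relSec E s ∩ relSec Etil x₀).Nonempty → s ∈ hT₀.toFinset :=
    fun s hs ⟨_, hyE, hyA⟩ => hT₀.mem_toFinset.2 ⟨mem_relSec_relComp_transpose hyA hyE, hs⟩
  have hinside : ∀ s ∈ hT'.toFinset, relSec E s ⊆ relSec Etil x₀ := fun s hs =>
    (relSec_subset_relSec_relComp (hT'.mem_toFinset.1 hs).1).trans (relSec_mono hsub x₀)
  calc C ^ 2 = C * (C * 1) := by ring
    _ ≤ C * (C * ∑ᶠ s ∈ relSec E' x₀ ∩ S, boundaryS S θ s) := by gcongr; exact heff x₀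
    _ = C * ∑ s ∈ hT'.toFinset, boundaryS S θ s * μ.real (relSec E s) := by
        rw [finsum_mem_eq_finite_toFinset_sum _ hT', Finset.mul_sum]
        refine congrArg _ (Finset.sum_congr rfl fun s hs => ?_)
        rw [hmeasC s (hT'.mem_toFinset.1 hs).2, mul_comm]
    _ ≤ C * ∫ x in relSec Etil x₀,
          ∑ᶠ s ∈ S, boundaryS S θ s * (relSec E s).indicator (fun _ => (1 : ℝ)) x ∂μ := by
        gcongr
        exact sum_mul_measureReal_le_setIntegral_finsum_mem_mul_indicator μ
          (measurable_prodMk_left hEtilmeas) (by simp) hcover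
          (fun s _ => measurable_prodMk_left hEmeas)
          (fun s hs => by simp [hconst s (hT₀.mem_toFinset.1 hs).2]) (fun s _ => hpos s) (by simp)
          hinside fun s hs => nonempty_of_measure_ne_zero (μ := μ)
            (by simp [hconst s (hT'.mem_toFinset.1 hs).2, hC])
    _ = ∫ x in relSec Etil x₀, boundaryX μ c x ∂μ := by
        rw [funext hboundary, integral_const_mul]

theorem smeared_Ponzi_scheme_is_mu_PS {X : Type*} [MeasurableSpace X]
    (μ : Measure X) [SigmaFinite μ] (𝓔 : CoarseStructure X)
    (huniform : ∀ F ∈ 𝓔.sets, MeasurableSet F →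
      ∃ K : ENNReal, K ≠ ⊤ ∧ ∀ x : X, μ (relSec F x) ≤ K)
    (S : Set X) (hS : UniformLocallyFinite 𝓔 S)
    -- θ is a Ponzi scheme supported in S × S
    (θ : X × X → ℝ) (M : ℝ) (hθbd : ∀ p : X × X, |θ p| ≤ M)
    (Eθ : Set (X × X)) (hEθ : Eθ ∈ 𝓔.sets)
    (hsupp : ∀ p : X × X, θ p ≠ 0 → p.1 ∈ S ∧ p.2 ∈ S ∧ p ∈ Eθ)
    (hpos : ∀ s : X, 0 ≤ boundaryS S θ s)
    (E' : Set (X × X)) (hE' : E' ∈ 𝓔.sets)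
    (heff : ∀ x₀ : X, 1 ≤ ∑ᶠ s ∈ relSec E' x₀ ∩ S, boundaryS S θ s)
    -- E is a measurable controlled set constant on S
    (E : Set (X × X)) (hE : E ∈ 𝓔.sets) (hEmeas : MeasurableSet E)
    (C : ℝ) (hC : 0 < C) (hconst : ∀ s ∈ S, μ (relSec E s) = ENNReal.ofReal C)
    -- c is the smeared chain, whose boundary is as computed before
    (c : X × X → ℝ) (hcmeas : Measurable c)
    (hboundary : ∀ x : X, boundaryX μ c x =
      C * ∑ᶠ s ∈ S, boundaryS S θ s * Set.indicator (relSec E s) (fun _ => (1 : ℝ)) x) :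
    (∀ x : X, 0 ≤ boundaryX μ c x) ∧
    ∀ Etil ∈ 𝓔.sets, MeasurableSet Etil → relComp E' E ⊆ Etil →
      ∀ x₀ : X, C ^ 2 ≤ ∫ x in relSec Etil x₀, boundaryX μ c x ∂μ :=
  smeared_Ponzi_scheme_is_mu_PS_general μ 𝓔 S hS θ hpos E' hE' heff E hE hEmeas C hC hconst c
    hboundary
end

section
/- Let φ : (X, 𝓔^X, 𝓑^X, μ_X) → (Y, 𝓔^Y, 𝓑^Y, μ_Y) be measurable, measure effectively proper (φ_*μ_X ≤ C·μ_Y), bornologous, and coarsely equivalent, with both measure spaces σ-finite and both coarse structures measurable with μ_X, μ_Y uniform. If c is a μ_X-Ponzi scheme on X (a μ_X-1 chain whose boundary ∂c is effective), then the pushforward φ_*c is a μ_Y-Ponzi scheme on Y. -/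
/-!
Pairing a 1-chain with the coboundary of a test function, `∫ c p * (g p.2 - g p.1) = ∫ ∂c * g`,
and using the duality defining `φ_* c`, one gets `∫ ∂(φ_* c) * g = ∫ ∂c * (g ∘ φ)` for
`g ∈ L¹(Y)`; uniformity of the measures makes everything integrable once `g p.2 - g p.1` is cut
down to a controlled set. Testing against indicators of finite-measure sets, whose preimages have
finite measure by effective properness, gives `∂(φ_* c) ≥ 0` and
`∫_{G_y} ∂(φ_* c) = ∫_{φ⁻¹ G_y} ∂c ≥ ∫_{E_{ψ y}} ∂c ≥ 1`, where `G` is a controlled set containing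
`(y, φ x)` whenever `(ψ y, x) ∈ E`; it is controlled because `φ ∘ ψ` is close to the identity.
-/

open MeasureTheory

/-- Pushforward of an entourage along a map. -/
def relPush {X Y : Type*} (φ : X → Y) (E : Set (X × X)) : Set (Y × Y) :=
  {q | ∃ x x' : X, (x, x') ∈ E ∧ q = (φ x, φ x')}

/-- A set is bounded if it is contained in a section of a controlled set. -/
def CoarseBounded {X : Type*} (𝓔 : CoarseStructure X) (B : Set X) : Prop :=
  ∃ E ∈ 𝓔.sets, ∃ x : X, B ⊆ relSec E x

/-- Two maps into a coarse space are close. -/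
def CloseMaps {S X : Type*} (𝓔 : CoarseStructure X) (φ₁ φ₂ : S → X) : Prop :=
  {p : X × X | ∃ s : S, p = (φ₁ s, φ₂ s)} ∈ 𝓔.sets

/-- The coarse structure `𝓔` is measurable. -/
def MeasurableCoarseStructure {X : Type*} [MeasurableSpace X]
    (𝓔 : CoarseStructure X) : Prop :=
  ∀ E ∈ 𝓔.sets, ∃ E' ∈ 𝓔.sets, MeasurableSet E' ∧ E ⊆ E'

/-- `μ` is a uniform measure: sections of measurable controlled sets have
uniformly bounded measure. -/
def UniformMeasure {X : Type*} [MeasurableSpace X] (𝓔 : CoarseStructure X)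
    (μ : Measure X) : Prop :=
  ∀ E ∈ 𝓔.sets, MeasurableSet E → ∃ K : ENNReal, K ≠ ⊤ ∧ ∀ x : X, μ (relSec E x) ≤ K

/-- A `μ`-1 chain: essentially bounded and vanishing a.e. outside a measurable
controlled set. -/
def IsMuOneChain {X : Type*} [MeasurableSpace X] (𝓔 : CoarseStructure X)
    (μ : Measure X) (c : X × X → ℝ) : Prop :=
  (∃ M : ℝ, ∀ᵐ p ∂(μ.prod μ), |c p| ≤ M) ∧
  ∃ E ∈ 𝓔.sets, MeasurableSet E ∧ ∀ᵐ p ∂(μ.prod μ), p ∉ E → c p = 0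

/-- An effective `μ`-0 chain. -/
def IsEffective {X : Type*} [MeasurableSpace X] (𝓔 : CoarseStructure X)
    (μ : Measure X) (f : X → ℝ) : Prop :=
  (∀ᵐ x ∂μ, 0 ≤ f x) ∧
  ∃ E ∈ 𝓔.sets, MeasurableSet E ∧ ∀ x₀ : X, 1 ≤ ∫ x in relSec E x₀, f x ∂μ

/-- A `μ`-Ponzi scheme: a `μ`-1 chain with effective boundary. -/
def IsMuPS {X : Type*} [MeasurableSpace X] (𝓔 : CoarseStructure X)
    (μ : Measure X) (c : X × X → ℝ) : Prop :=
  IsMuOneChain 𝓔 μ c ∧ IsEffective 𝓔 μ (boundaryX μ c)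

open scoped ENNReal

section Indicator

variable {γ : Type*} [MeasurableSpace γ] {ρ : Measure γ} {s : Set γ}

theorem integrable_indicator_one (hs : MeasurableSet s) (hρs : ρ s ≠ ⊤) :
    Integrable (s.indicator (1 : γ → ℝ)) ρ :=
  (integrable_indicator_iff hs).2 (integrableOn_const hρs)

theorem setIntegral_eq_integral_mul_indicator_one (hs : MeasurableSet s) (f : γ → ℝ) :
    ∫ x in s, f x ∂ρ = ∫ x, f x * s.indicator 1 x ∂ρ := by
  simp_rw [← Set.indicator_mul_right, Pi.one_apply, mul_one]
  exact (integral_indicator hs).symm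

theorem mul_ae_eq_mul_of_eqOn {f h k : γ → ℝ} (hf : ∀ᵐ x ∂ρ, x ∉ s → f x = 0)
    (hhk : Set.EqOn h k s) : (fun x => f x * h x) =ᵐ[ρ] fun x => f x * k x := by
  filter_upwards [hf] with x hx
  by_cases hxs : x ∈ s
  · rw [hhk hxs]
  · simp [hx hxs]

theorem integrable_mul_of_integrable_indicator {f G : γ → ℝ} (hf : AEStronglyMeasurable f ρ)
    {M : ℝ} (hM : ∀ᵐ x ∂ρ, |f x| ≤ M) (hfs : ∀ᵐ x ∂ρ, x ∉ s → f x = 0)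
    (hG : Integrable (s.indicator G) ρ) :
    Integrable (fun x => f x * G x) ρ :=
  (hG.bdd_mul hf hM).congr (mul_ae_eq_mul_of_eqOn hfs Set.eqOn_indicator)

end Indicator

section IntegrableOnProduct

variable {α β : Type*} [MeasurableSpace α] [MeasurableSpace β] {μ : Measure α} {ν : Measure β}
  {F : Set (α × β)} {K : ℝ≥0∞}

theorem integrable_indicator_comp_fst (hF : MeasurableSet F) (hK : K ≠ ⊤)
    (hsec : ∀ x, ν (Prod.mk x ⁻¹' F) ≤ K) {g : α → ℝ} (hg : Integrable g μ) :
    Integrable (F.indicator fun p => g p.1) (μ.prod ν) := by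
  refine ⟨hg.1.comp_fst.indicator hF, ?_⟩
  rw [hasFiniteIntegral_def]
  calc ∫⁻ p, ‖F.indicator (fun p => g p.1) p‖ₑ ∂μ.prod ν
      ≤ ∫⁻ x, ∫⁻ y, F.indicator (fun p => ‖g p.1‖ₑ) (x, y) ∂ν ∂μ := by
        simp_rw [enorm_indicator_eq_indicator_enorm]
        exact lintegral_prod_le _
    _ = ∫⁻ x, ‖g x‖ₑ * ν (Prod.mk x ⁻¹' F) ∂μ := by
        congr with x
        rw [← lintegral_indicator_const (measurable_prodMk_left hF)]
        rfl
    _ ≤ ∫⁻ x, ‖g x‖ₑ * K ∂μ := by gcongr with x; exact hsec x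
    _ < ⊤ := by
        rw [lintegral_mul_const' _ _ hK]
        exact ENNReal.mul_lt_top hg.2 hK.lt_top

theorem integrable_indicator_comp_snd [SFinite μ] [SFinite ν] (hF : MeasurableSet F)
    (hK : K ≠ ⊤) (hsec : ∀ y, μ ((·, y) ⁻¹' F) ≤ K) {g : β → ℝ} (hg : Integrable g ν) :
    Integrable (F.indicator fun p => g p.2) (μ.prod ν) :=
  (integrable_indicator_comp_fst (measurable_swap hF) hK hsec hg).swap

end IntegrableOnProduct

section OneChain

variable {X : Type*} [MeasurableSpace X] {𝓔 : CoarseStructure X} {μ : Measure X}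
  {E : Set (X × X)} {g : X → ℝ}

theorem UniformMeasure.integrable_indicator_comp_fst (hu : UniformMeasure 𝓔 μ)
    (hE : E ∈ 𝓔.sets) (hEm : MeasurableSet E) (hg : Integrable g μ) :
    Integrable (E.indicator fun p => g p.1) (μ.prod μ) :=
  let ⟨_, hK, hsec⟩ := hu E hE hEm
  _root_.integrable_indicator_comp_fst hEm hK hsec hg

theorem UniformMeasure.integrable_indicator_comp_snd [SFinite μ] (hu : UniformMeasure 𝓔 μ)
    (hE : E ∈ 𝓔.sets) (hEm : MeasurableSet E) (hg : Integrable g μ) :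
    Integrable (E.indicator fun p => g p.2) (μ.prod μ) :=
  let ⟨_, hK, hsec⟩ := hu _ (𝓔.transpose_mem E hE) (measurable_swap hEm)
  _root_.integrable_indicator_comp_snd hEm hK hsec hg

variable {c : X × X → ℝ}

theorem IsMuOneChain.integrable_mul_comp_fst (hc : IsMuOneChain 𝓔 μ c)
    (hu : UniformMeasure 𝓔 μ) (hcm : AEStronglyMeasurable c (μ.prod μ)) (hg : Integrable g μ) :
    Integrable (fun p => c p * g p.1) (μ.prod μ) :=
  let ⟨⟨_, hM⟩, _, hE, hEm, hcE⟩ := hc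
  integrable_mul_of_integrable_indicator hcm hM hcE (hu.integrable_indicator_comp_fst hE hEm hg)

theorem IsMuOneChain.integrable_mul_comp_snd [SFinite μ] (hc : IsMuOneChain 𝓔 μ c)
    (hu : UniformMeasure 𝓔 μ) (hcm : AEStronglyMeasurable c (μ.prod μ)) (hg : Integrable g μ) :
    Integrable (fun p => c p * g p.2) (μ.prod μ) :=
  let ⟨⟨_, hM⟩, _, hE, hEm, hcE⟩ := hc
  integrable_mul_of_integrable_indicator hcm hM hcE (hu.integrable_indicator_comp_snd hE hEm hg)

theorem IsMuOneChain.integrable_integral_mul [SFinite μ] (hc : IsMuOneChain 𝓔 μ c)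
    (hu : UniformMeasure 𝓔 μ) (hcm : AEStronglyMeasurable c (μ.prod μ)) (hg : Integrable g μ) :
    Integrable (fun x => (∫ y, c (y, x) ∂μ) * g x) μ ∧
      Integrable (fun x => (∫ y, c (x, y) ∂μ) * g x) μ := by
  have hin := (hc.integrable_mul_comp_snd hu hcm hg).integral_prod_right
  have hout := (hc.integrable_mul_comp_fst hu hcm hg).integral_prod_left
  simp only [integral_mul_const] at hin hout
  exact ⟨hin, hout⟩

theorem IsMuOneChain.integrable_boundaryX_mul [SFinite μ] (hc : IsMuOneChain 𝓔 μ c)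
    (hu : UniformMeasure 𝓔 μ) (hcm : AEStronglyMeasurable c (μ.prod μ)) (hg : Integrable g μ) :
    Integrable (fun x => boundaryX μ c x * g x) μ := by
  obtain ⟨hin, hout⟩ := hc.integrable_integral_mul hu hcm hg
  simp only [boundaryX, sub_mul]
  exact hin.sub hout

theorem IsMuOneChain.integrableOn_boundaryX [SFinite μ] (hc : IsMuOneChain 𝓔 μ c)
    (hu : UniformMeasure 𝓔 μ) (hcm : AEStronglyMeasurable c (μ.prod μ)) {s : Set X}
    (hs : MeasurableSet s) (hμs : μ s ≠ ⊤) : IntegrableOn (boundaryX μ c) s μ := by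
  have := hc.integrable_boundaryX_mul hu hcm (integrable_indicator_one hs hμs)
  rw [← integrable_indicator_iff hs]
  simpa only [← Set.indicator_mul_right, Pi.one_apply, mul_one] using this

theorem IsMuOneChain.integral_mul_sub_eq [SFinite μ] (hc : IsMuOneChain 𝓔 μ c)
    (hu : UniformMeasure 𝓔 μ) (hcm : AEStronglyMeasurable c (μ.prod μ)) (hg : Integrable g μ) :
    ∫ p, c p * (g p.2 - g p.1) ∂μ.prod μ = ∫ x, boundaryX μ c x * g x ∂μ := by
  have h₂ := hc.integrable_mul_comp_snd hu hcm hg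
  have h₁ := hc.integrable_mul_comp_fst hu hcm hg
  obtain ⟨hin, hout⟩ := hc.integrable_integral_mul hu hcm hg
  simp_rw [mul_sub, boundaryX, sub_mul]
  rw [integral_sub h₂ h₁, integral_sub hin hout, integral_prod_symm _ h₂, integral_prod _ h₁]
  simp only [integral_mul_const]

end OneChain

section Pushforward

variable {X Y : Type*} [MeasurableSpace X] [MeasurableSpace Y] {𝓔X : CoarseStructure X}
  {𝓔Y : CoarseStructure Y} {μX : Measure X} {μY : Measure Y} {φ : X → Y}
  {c : X × X → ℝ} {d : Y × Y → ℝ}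

/-- `d = φ_* c`, characterised by duality against `L¹(Y × Y)`. -/
def IsChainPushforward (μX : Measure X) (μY : Measure Y) (φ : X → Y) (c : X × X → ℝ)
    (d : Y × Y → ℝ) : Prop :=
  ∀ g : Y × Y → ℝ, Integrable g (μY.prod μY) →
    ∫ q, d q * g q ∂(μY.prod μY) = ∫ p, c p * g (φ p.1, φ p.2) ∂(μX.prod μX)

theorem IsChainPushforward.ae_eq_zero_of_notMem [SigmaFinite μY]
    (hcd : IsChainPushforward μX μY φ c d) (hdm : AEStronglyMeasurable d (μY.prod μY)) {M : ℝ}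
    (hM : ∀ᵐ q ∂μY.prod μY, |d q| ≤ M) {F : Set (Y × Y)} (hF : MeasurableSet F)
    (hcF : ∀ᵐ p ∂μX.prod μX, (φ p.1, φ p.2) ∉ F → c p = 0) :
    ∀ᵐ q ∂μY.prod μY, q ∉ F → d q = 0 := by
  have hzero : d =ᵐ[(μY.prod μY).restrict Fᶜ] 0 := by
    refine ae_eq_zero_of_forall_setIntegral_eq_of_sigmaFinite
      (fun s _ hμs => Measure.integrableOn_of_bounded hμs.ne hdm.restrict
        (ae_restrict_of_ae (ae_restrict_of_ae hM))) fun s hs hμs => ?_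
    rw [Measure.restrict_apply hs] at hμs
    rw [Measure.restrict_restrict hs, setIntegral_eq_integral_mul_indicator_one (hs.inter hF.compl),
      hcd _ (integrable_indicator_one (hs.inter hF.compl) hμs.ne)]
    refine (integral_congr_ae (mul_ae_eq_mul_of_eqOn (k := 0) hcF fun p hp => ?_)).trans ?_
    · exact Set.indicator_of_notMem (fun h => h.2 hp) _
    · simp
  exact (ae_restrict_iff' hF.compl).1 hzero

theorem IsChainPushforward.exists_common_support [SigmaFinite μY]
    (hcd : IsChainPushforward μX μY φ c d) (hc : IsMuOneChain 𝓔X μX c)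
    (hmY : MeasurableCoarseStructure 𝓔Y) (hborn : ∀ E ∈ 𝓔X.sets, relPush φ E ∈ 𝓔Y.sets)
    (hdm : AEStronglyMeasurable d (μY.prod μY)) {M : ℝ} (hM : ∀ᵐ q ∂μY.prod μY, |d q| ≤ M) :
    ∃ F ∈ 𝓔Y.sets, MeasurableSet F ∧ (∀ᵐ p ∂μX.prod μX, (φ p.1, φ p.2) ∉ F → c p = 0) ∧
      ∀ᵐ q ∂μY.prod μY, q ∉ F → d q = 0 := by
  obtain ⟨-, E, hE, -, hcE⟩ := hc
  obtain ⟨F, hF, hFm, hEF⟩ := hmY _ (hborn E hE)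
  have hcF : ∀ᵐ p ∂μX.prod μX, (φ p.1, φ p.2) ∉ F → c p = 0 :=
    hcE.mono fun p hp hpF => hp fun hpE => hpF (hEF ⟨p.1, p.2, hpE, rfl⟩)
  exact ⟨F, hF, hFm, hcF, hcd.ae_eq_zero_of_notMem hdm hM hFm hcF⟩

/-- The weak form of `∂ (φ_* c) = φ_* (∂ c)`. -/
theorem IsChainPushforward.integral_boundaryX_mul [SFinite μX] [SFinite μY]
    (hcd : IsChainPushforward μX μY φ c d)
    (hc : IsMuOneChain 𝓔X μX c) (huX : UniformMeasure 𝓔X μX)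
    (hcm : AEStronglyMeasurable c (μX.prod μX))
    (hd : IsMuOneChain 𝓔Y μY d) (huY : UniformMeasure 𝓔Y μY)
    (hdm : AEStronglyMeasurable d (μY.prod μY))
    {F : Set (Y × Y)} (hF : F ∈ 𝓔Y.sets) (hFm : MeasurableSet F)
    (hcF : ∀ᵐ p ∂μX.prod μX, (φ p.1, φ p.2) ∉ F → c p = 0)
    (hdF : ∀ᵐ q ∂μY.prod μY, q ∉ F → d q = 0)
    {g : Y → ℝ} (hg : Integrable g μY) (hgφ : Integrable (g ∘ φ) μX) :
    ∫ y, boundaryX μY d y * g y ∂μY = ∫ x, boundaryX μX c x * g (φ x) ∂μX := by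
  -- `g q.2 - g q.1` itself need not be integrable on `Y × Y`; cut it down to `F`.
  set h := F.indicator (fun q => g q.2) - F.indicator (fun q => g q.1)
  have hh : Integrable h (μY.prod μY) :=
    (huY.integrable_indicator_comp_snd hF hFm hg).sub (huY.integrable_indicator_comp_fst hF hFm hg)
  have hhF : Set.EqOn h (fun q => g q.2 - g q.1) F := fun q hq => by
    simp [h, Set.indicator_of_mem hq]
  calc ∫ y, boundaryX μY d y * g y ∂μY
      = ∫ q, d q * (g q.2 - g q.1) ∂μY.prod μY := (hd.integral_mul_sub_eq huY hdm hg).symm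
    _ = ∫ q, d q * h q ∂μY.prod μY := integral_congr_ae (mul_ae_eq_mul_of_eqOn hdF hhF).symm
    _ = ∫ p, c p * h (φ p.1, φ p.2) ∂μX.prod μX := hcd h hh
    _ = ∫ p, c p * (g (φ p.2) - g (φ p.1)) ∂μX.prod μX :=
        integral_congr_ae (mul_ae_eq_mul_of_eqOn hcF fun _ hp => hhF hp)
    _ = ∫ x, boundaryX μX c x * g (φ x) ∂μX := hc.integral_mul_sub_eq huX hcm hgφ

theorem IsChainPushforward.setIntegral_boundaryX [SFinite μX] [SFinite μY]
    (hcd : IsChainPushforward μX μY φ c d)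
    (hc : IsMuOneChain 𝓔X μX c) (huX : UniformMeasure 𝓔X μX)
    (hcm : AEStronglyMeasurable c (μX.prod μX))
    (hd : IsMuOneChain 𝓔Y μY d) (huY : UniformMeasure 𝓔Y μY)
    (hdm : AEStronglyMeasurable d (μY.prod μY))
    {F : Set (Y × Y)} (hF : F ∈ 𝓔Y.sets) (hFm : MeasurableSet F)
    (hcF : ∀ᵐ p ∂μX.prod μX, (φ p.1, φ p.2) ∉ F → c p = 0)
    (hdF : ∀ᵐ q ∂μY.prod μY, q ∉ F → d q = 0) (hφ : Measurable φ)
    {s : Set Y} (hs : MeasurableSet s) (hμs : μY s ≠ ⊤) (hφs : μX (φ ⁻¹' s) ≠ ⊤) :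
    ∫ y in s, boundaryX μY d y ∂μY = ∫ x in φ ⁻¹' s, boundaryX μX c x ∂μX := by
  rw [setIntegral_eq_integral_mul_indicator_one hs,
    setIntegral_eq_integral_mul_indicator_one (hφ hs)]
  exact hcd.integral_boundaryX_mul hc huX hcm hd huY hdm hF hFm hcF hdF
    (integrable_indicator_one hs hμs) (integrable_indicator_one (hφ hs) hφs)

theorem IsChainPushforward.ae_nonneg_boundaryX [SFinite μX] [SigmaFinite μY]
    (hcd : IsChainPushforward μX μY φ c d)
    (hc : IsMuOneChain 𝓔X μX c) (huX : UniformMeasure 𝓔X μX)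
    (hcm : AEStronglyMeasurable c (μX.prod μX))
    (hd : IsMuOneChain 𝓔Y μY d) (huY : UniformMeasure 𝓔Y μY)
    (hdm : AEStronglyMeasurable d (μY.prod μY))
    {F : Set (Y × Y)} (hF : F ∈ 𝓔Y.sets) (hFm : MeasurableSet F)
    (hcF : ∀ᵐ p ∂μX.prod μX, (φ p.1, φ p.2) ∉ F → c p = 0)
    (hdF : ∀ᵐ q ∂μY.prod μY, q ∉ F → d q = 0) (hφ : Measurable φ)
    (hfin : ∀ s, MeasurableSet s → μY s ≠ ⊤ → μX (φ ⁻¹' s) ≠ ⊤)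
    (hc₀ : ∀ᵐ x ∂μX, 0 ≤ boundaryX μX c x) :
    ∀ᵐ y ∂μY, 0 ≤ boundaryX μY d y := by
  refine ae_nonneg_of_forall_setIntegral_nonneg_of_sigmaFinite
    (fun s hs hμs => hd.integrableOn_boundaryX huY hdm hs hμs.ne) fun s hs hμs => ?_
  rw [hcd.setIntegral_boundaryX hc huX hcm hd huY hdm hF hFm hcF hdF hφ hs hμs.ne
    (hfin s hs hμs.ne)]
  exact integral_nonneg_of_ae (ae_restrict_of_ae hc₀)

end Pushforward

theorem exists_relSec_subset_preimage_relSec {X Y : Type*} [MeasurableSpace Y]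
    {𝓔Y : CoarseStructure Y} (hmY : MeasurableCoarseStructure 𝓔Y) {φ : X → Y} {ψ : Y → X}
    (hφψ : CloseMaps 𝓔Y (fun y => φ (ψ y)) id) {E : Set (X × X)} (hE : relPush φ E ∈ 𝓔Y.sets) :
    ∃ G ∈ 𝓔Y.sets, MeasurableSet G ∧ ∀ y, relSec E (ψ y) ⊆ φ ⁻¹' relSec G y := by
  have hS : {q : Y × Y | ∃ x, (ψ q.1, x) ∈ E ∧ q.2 = φ x} ∈ 𝓔Y.sets := by
    refine 𝓔Y.subset_mem _ _ (𝓔Y.comp_mem _ _ (𝓔Y.transpose_mem _ hφψ) hE) ?_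
    rintro ⟨y, -⟩ ⟨x, hx, rfl⟩
    exact ⟨φ (ψ y), ⟨y, rfl⟩, ψ y, x, hx, rfl⟩
  obtain ⟨G, hG, hGm, hSG⟩ := hmY _ hS
  exact ⟨G, hG, hGm, fun y x hx => hSG ⟨x, hx, rfl⟩⟩

theorem IsChainPushforward.isEffective_boundaryX {X Y : Type*} [MeasurableSpace X]
    [MeasurableSpace Y] {𝓔X : CoarseStructure X} {𝓔Y : CoarseStructure Y} {μX : Measure X}
    {μY : Measure Y} [SFinite μX] [SigmaFinite μY] {φ : X → Y} {ψ : Y → X} {c : X × X → ℝ}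
    {d : Y × Y → ℝ} (hcd : IsChainPushforward μX μY φ c d)
    (hc : IsMuOneChain 𝓔X μX c) (huX : UniformMeasure 𝓔X μX)
    (hcm : AEStronglyMeasurable c (μX.prod μX))
    (hd : IsMuOneChain 𝓔Y μY d) (huY : UniformMeasure 𝓔Y μY)
    (hdm : AEStronglyMeasurable d (μY.prod μY))
    {F : Set (Y × Y)} (hF : F ∈ 𝓔Y.sets) (hFm : MeasurableSet F)
    (hcF : ∀ᵐ p ∂μX.prod μX, (φ p.1, φ p.2) ∉ F → c p = 0)
    (hdF : ∀ᵐ q ∂μY.prod μY, q ∉ F → d q = 0) (hφ : Measurable φ)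
    (hfin : ∀ s, MeasurableSet s → μY s ≠ ⊤ → μX (φ ⁻¹' s) ≠ ⊤)
    (hmY : MeasurableCoarseStructure 𝓔Y) (hborn : ∀ E ∈ 𝓔X.sets, relPush φ E ∈ 𝓔Y.sets)
    (hφψ : CloseMaps 𝓔Y (fun y => φ (ψ y)) id) (hceff : IsEffective 𝓔X μX (boundaryX μX c)) :
    IsEffective 𝓔Y μY (boundaryX μY d) := by
  obtain ⟨hc₀, E, hE, -, hE₁⟩ := hceff
  obtain ⟨G, hG, hGm, hEG⟩ := exists_relSec_subset_preimage_relSec hmY hφψ (hborn E hE)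
  obtain ⟨K, hK, hGK⟩ := huY G hG hGm
  refine ⟨hcd.ae_nonneg_boundaryX hc huX hcm hd huY hdm hF hFm hcF hdF hφ hfin hc₀,
    G, hG, hGm, fun y => ?_⟩
  have hs : MeasurableSet (relSec G y) := measurable_prodMk_left hGm
  have hμs : μY (relSec G y) ≠ ⊤ := ((hGK y).trans_lt hK.lt_top).ne
  calc 1 ≤ ∫ x in relSec E (ψ y), boundaryX μX c x ∂μX := hE₁ (ψ y)
    _ ≤ ∫ x in φ ⁻¹' relSec G y, boundaryX μX c x ∂μX :=
        setIntegral_mono_set (hc.integrableOn_boundaryX huX hcm (hφ hs) (hfin _ hs hμs))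
          (ae_restrict_of_ae hc₀) (hEG y).eventuallyLE
    _ = ∫ y' in relSec G y, boundaryX μY d y' ∂μY :=
        (hcd.setIntegral_boundaryX hc huX hcm hd huY hdm hF hFm hcF hdF hφ hs hμs
          (hfin _ hs hμs)).symm

theorem pushforward_of_mu_PS_general {X Y : Type*} [MeasurableSpace X] [MeasurableSpace Y]
    (𝓔X : CoarseStructure X) (𝓔Y : CoarseStructure Y)
    (μX : Measure X) (μY : Measure Y) [SigmaFinite μX] [SigmaFinite μY]
    (hmY : MeasurableCoarseStructure 𝓔Y)
    (huX : UniformMeasure 𝓔X μX) (huY : UniformMeasure 𝓔Y μY)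
    (φ : X → Y) (hφmeas : Measurable φ)
    -- φ is measure effectively proper with constant C > 0
    (C : ℝ)
    (hmep : ∀ B : Set Y, MeasurableSet B → (μX.map φ) B ≤ ENNReal.ofReal C * μY B)
    -- φ is bornologous
    (hborn : ∀ E ∈ 𝓔X.sets, relPush φ E ∈ 𝓔Y.sets)
    -- φ is a coarse equivalence, with coarse inverse ψ
    (ψ : Y → X)
    (hφψ : CloseMaps 𝓔Y (fun y => φ (ψ y)) id)
    -- c is a μX-Ponzi scheme on X
    (c : X × X → ℝ) (hcmeas : Measurable c) (hc : IsMuPS 𝓔X μX c) :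
    -- then the pushforward φ_* c (characterized by duality) is a μY-Ponzi scheme
    ∀ d : Y × Y → ℝ, Measurable d →
      (∃ M : ℝ, ∀ᵐ q ∂(μY.prod μY), |d q| ≤ M) →
      (∀ g : Y × Y → ℝ, Integrable g (μY.prod μY) →
        ∫ q, d q * g q ∂(μY.prod μY) =
          ∫ p, c p * g (φ p.1, φ p.2) ∂(μX.prod μX)) →
      IsMuPS 𝓔Y μY d := by
  rintro d hdmeas ⟨M, hM⟩ hcd
  obtain ⟨hc, hceff⟩ := hc
  obtain ⟨F, hF, hFm, hcF, hdF⟩ :=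
    IsChainPushforward.exists_common_support hcd hc hmY hborn hdmeas.aestronglyMeasurable hM
  have hd : IsMuOneChain 𝓔Y μY d := ⟨⟨M, hM⟩, F, hF, hFm, hdF⟩
  have hfin : ∀ s, MeasurableSet s → μY s ≠ ⊤ → μX (φ ⁻¹' s) ≠ ⊤ := fun s hs hμs => by
    have h := hmep s hs
    rw [Measure.map_apply hφmeas hs] at h
    exact ne_top_of_le_ne_top (ENNReal.mul_ne_top ENNReal.ofReal_ne_top hμs) h
  exact ⟨hd, IsChainPushforward.isEffective_boundaryX hcd hc huX hcmeas.aestronglyMeasurable hd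
    huY hdmeas.aestronglyMeasurable hF hFm hcF hdF hφmeas hfin hmY hborn hφψ hceff⟩

theorem pushforward_of_mu_PS {X Y : Type*} [MeasurableSpace X] [MeasurableSpace Y]
    (𝓔X : CoarseStructure X) (𝓔Y : CoarseStructure Y)
    (μX : Measure X) (μY : Measure Y) [SigmaFinite μX] [SigmaFinite μY]
    (hmX : MeasurableCoarseStructure 𝓔X) (hmY : MeasurableCoarseStructure 𝓔Y)
    (huX : UniformMeasure 𝓔X μX) (huY : UniformMeasure 𝓔Y μY)
    (φ : X → Y) (hφmeas : Measurable φ)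
    -- φ is measure effectively proper with constant C > 0
    (C : ℝ) (hC : 0 < C)
    (hmep : ∀ B : Set Y, MeasurableSet B → (μX.map φ) B ≤ ENNReal.ofReal C * μY B)
    -- φ is bornologous
    (hborn : ∀ E ∈ 𝓔X.sets, relPush φ E ∈ 𝓔Y.sets)
    -- φ is a coarse equivalence, with coarse inverse ψ
    (ψ : Y → X)
    (hψproper : ∀ B : Set X, CoarseBounded 𝓔X B → CoarseBounded 𝓔Y (ψ ⁻¹' B))
    (hφψ : CloseMaps 𝓔Y (fun y => φ (ψ y)) id)
    (hψφ : CloseMaps 𝓔X (fun x => ψ (φ x)) id)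
    -- c is a μX-Ponzi scheme on X
    (c : X × X → ℝ) (hcmeas : Measurable c) (hc : IsMuPS 𝓔X μX c) :
    -- then the pushforward φ_* c (characterized by duality) is a μY-Ponzi scheme
    ∀ d : Y × Y → ℝ, Measurable d →
      (∃ M : ℝ, ∀ᵐ q ∂(μY.prod μY), |d q| ≤ M) →
      (∀ g : Y × Y → ℝ, Integrable g (μY.prod μY) →
        ∫ q, d q * g q ∂(μY.prod μY) =
          ∫ p, c p * g (φ p.1, φ p.2) ∂(μX.prod μX)) →
      IsMuPS 𝓔Y μY d :=
  pushforward_of_mu_PS_general 𝓔X 𝓔Y μX μY hmY huX huY φ hφmeas C hmep hborn ψ hφψ c hcmeas hc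
end
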